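/- For every simplicial set X, the group K_0(i_! X) is the free abelian group generated by the set π_0(X) of connected components of X (which equals π_0(i^* i_! X)). -/

import Mathlib

open CategoryTheory CategoryTheory.Limits Opposite Simplicial

structure TreeCat where
  Ω : Type
  [instCat : SmallCategory Ω]
  /-- the tree with a single edge and no vertices -/
  eta : Ω
  /-- the `n`-corolla -/
  corolla : ℕ → Ω
  /-- the inclusions of the `n` leaves of the `n`-corolla -/
  leaf : ∀ n : ℕ, Fin n → (eta ⟶ corolla n)
  /-- the inclusion of the root edge of the `n`-corolla -/
  root : ∀ n : ℕ, eta ⟶ corolla n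

attribute [instance] TreeCat.instCat

abbrev dSet (T : TreeCat) : Type 1 := T.Ωᵒᵖ ⥤ Type

variable (T : TreeCat)

abbrev dEdges (D : dSet T) : Type := D.obj (op T.eta)

def corollaRel (D : dSet T) : AddSubgroup (FreeAbelianGroup (dEdges T D)) :=
  AddSubgroup.closure
    {g | ∃ (n : ℕ) (x : D.obj (op (T.corolla n))),
      g = (∑ i : Fin n, FreeAbelianGroup.of (D.map (T.leaf n i).op x)) -
          FreeAbelianGroup.of (D.map (T.root n).op x)}

abbrev K0 (D : dSet T) : Type := FreeAbelianGroup (dEdges T D) ⧸ corollaRel T D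

def K0of (D : dSet T) (x : dEdges T D) : K0 T D :=
  QuotientAddGroup.mk (FreeAbelianGroup.of x)

def SSetPi0 (X : SSet) : Type :=
  Quot (fun a b : X _⦋0⦌ => ∃ e : X _⦋1⦌,
    X.map (SimplexCategory.δ 1).op e = a ∧ X.map (SimplexCategory.δ 0).op e = b)

structure IsShriek (X : SSet) (D : dSet T) where
  e0 : dEdges T D ≃ X _⦋0⦌
  e1 : D.obj (op (T.corolla 1)) ≃ X _⦋1⦌
  leaf_comm : ∀ d, e0 (D.map (T.leaf 1 0).op d) =
    X.map (SimplexCategory.δ 1).op (e1 d)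
  root_comm : ∀ d, e0 (D.map (T.root 1).op d) =
    X.map (SimplexCategory.δ 0).op (e1 d)
  empty : ∀ n : ℕ, n ≠ 1 → IsEmpty (D.obj (op (T.corolla n)))

/-!
In `i_! X` the only corollas are the `1`-corollas, i.e. the `1`-simplices of `X`, so the
relations defining `K₀` just identify the two vertices of each `1`-simplex. Hence `K₀(i_! X)`
is free on the vertices of `X` modulo the equivalence relation generated by the `1`-simplices,
which is `π₀(X)`.
-/

def SSetPi0.mk {X : SSet} (x : X _⦋0⦌) : SSetPi0 X :=
  Quot.mk _ x

theorem SSetPi0.mk_surjective {X : SSet} : Function.Surjective (SSetPi0.mk (X := X)) :=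
  Quot.mk_surjective

section K0

variable {T} {D : dSet T} {A : Type*} [AddCommGroup A]

theorem sum_K0of_leaf_eq_K0of_root (n : ℕ) (x : D.obj (op (T.corolla n))) :
    ∑ i : Fin n, K0of T D (D.map (T.leaf n i).op x) = K0of T D (D.map (T.root n).op x) := by
  have hrel : (∑ i : Fin n, FreeAbelianGroup.of (D.map (T.leaf n i).op x)) -
      FreeAbelianGroup.of (D.map (T.root n).op x) ∈ corollaRel T D :=
    AddSubgroup.subset_closure ⟨n, x, rfl⟩
  rw [← sub_eq_zero, ← (QuotientAddGroup.eq_zero_iff _).mpr hrel]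
  simp only [K0of, QuotientAddGroup.mk_sub, QuotientAddGroup.mk_sum]

theorem K0of_leaf_eq_K0of_root (x : D.obj (op (T.corolla 1))) :
    K0of T D (D.map (T.leaf 1 0).op x) = K0of T D (D.map (T.root 1).op x) := by
  simpa only [Fin.sum_univ_one] using sum_K0of_leaf_eq_K0of_root 1 x

def K0.lift (f : dEdges T D → A)
    (hf : ∀ (n : ℕ) (x : D.obj (op (T.corolla n))),
      ∑ i : Fin n, f (D.map (T.leaf n i).op x) = f (D.map (T.root n).op x)) :
    K0 T D →+ A :=
  QuotientAddGroup.lift _ (FreeAbelianGroup.lift f) <| by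
    rw [corollaRel, AddSubgroup.closure_le]
    rintro _ ⟨n, x, rfl⟩
    simp [hf]

@[simp]
theorem K0.lift_K0of (f : dEdges T D → A)
    (hf : ∀ (n : ℕ) (x : D.obj (op (T.corolla n))),
      ∑ i : Fin n, f (D.map (T.leaf n i).op x) = f (D.map (T.root n).op x))
    (x : dEdges T D) : K0.lift f hf (K0of T D x) = f x :=
  FreeAbelianGroup.lift_apply_of f x

theorem K0.hom_ext {φ ψ : K0 T D →+ A} (h : ∀ x, φ (K0of T D x) = ψ (K0of T D x)) : φ = ψ :=
  QuotientAddGroup.addMonoidHom_ext _ (FreeAbelianGroup.lift_ext _ _ h)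

end K0

namespace IsShriek

variable {T} {X : SSet} {D : dSet T} (h : IsShriek T X D)
theorem K0of_e0_symm_δ_one_eq_δ_zero (e : X _⦋1⦌) :
    K0of T D (h.e0.symm (X.map (SimplexCategory.δ 1).op e)) =
      K0of T D (h.e0.symm (X.map (SimplexCategory.δ 0).op e)) := by
  obtain ⟨d, rfl⟩ := h.e1.surjective e
  rw [← h.leaf_comm, ← h.root_comm, Equiv.symm_apply_apply, Equiv.symm_apply_apply]
  exact K0of_leaf_eq_K0of_root d

theorem pi0Mk_e0_leaf_eq_pi0Mk_e0_root (d : D.obj (op (T.corolla 1))) :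
    SSetPi0.mk (h.e0 (D.map (T.leaf 1 0).op d)) = SSetPi0.mk (h.e0 (D.map (T.root 1).op d)) :=
  Quot.sound ⟨h.e1 d, (h.leaf_comm d).symm, (h.root_comm d).symm⟩

def toK0 : FreeAbelianGroup (SSetPi0 X) →+ K0 T D :=
  FreeAbelianGroup.lift <| Quot.lift (fun x => K0of T D (h.e0.symm x)) <| by
    rintro _ _ ⟨e, rfl, rfl⟩
    exact h.K0of_e0_symm_δ_one_eq_δ_zero e

@[simp]
theorem toK0_of_mk (x : X _⦋0⦌) :
    h.toK0 (FreeAbelianGroup.of (SSetPi0.mk x)) = K0of T D (h.e0.symm x) :=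
  FreeAbelianGroup.lift_apply_of _ _

def fromK0 : K0 T D →+ FreeAbelianGroup (SSetPi0 X) :=
  K0.lift (fun d => FreeAbelianGroup.of (SSetPi0.mk (h.e0 d))) <| by
    intro n x
    rcases eq_or_ne n 1 with rfl | hn
    · rw [Fin.sum_univ_one, h.pi0Mk_e0_leaf_eq_pi0Mk_e0_root]
    · exact ((h.empty n hn).false x).elim

@[simp]
theorem fromK0_K0of (d : dEdges T D) :
    h.fromK0 (K0of T D d) = FreeAbelianGroup.of (SSetPi0.mk (h.e0 d)) :=
  K0.lift_K0of _ _ d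

def freePi0EquivK0 : FreeAbelianGroup (SSetPi0 X) ≃+ K0 T D :=
  h.toK0.toAddEquiv h.fromK0
    (FreeAbelianGroup.lift_ext _ _ fun q => by
      obtain ⟨x, rfl⟩ := SSetPi0.mk_surjective q
      rw [AddMonoidHom.comp_apply, toK0_of_mk, fromK0_K0of, Equiv.apply_symm_apply,
        AddMonoidHom.id_apply])
    (K0.hom_ext fun d => by
      rw [AddMonoidHom.comp_apply, fromK0_K0of, toK0_of_mk, Equiv.symm_apply_apply,
        AddMonoidHom.id_apply])

theorem freePi0EquivK0_of_mk (x : X _⦋0⦌) :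
    h.freePi0EquivK0 (FreeAbelianGroup.of (Quot.mk _ x)) = K0of T D (h.e0.symm x) :=
  h.toK0_of_mk x

end IsShriek

/-- `K₀(i_! X)` is the free abelian group on `π₀(X)`, via the
canonical generator map. -/
theorem K0_shriek_free_on_pi0 (X : SSet) (D : dSet T) (h : IsShriek T X D) :
    ∃ φ : FreeAbelianGroup (SSetPi0 X) ≃+ K0 T D,
      ∀ x : X _⦋0⦌,
        φ (FreeAbelianGroup.of (Quot.mk _ x)) = K0of T D (h.e0.symm x) :=
  ⟨h.freePi0EquivK0, h.freePi0EquivK0_of_mk⟩
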